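/- arXiv:2307.02579 — 3 statements merged into one kernel-verified Lean document; each statement's English description precedes it below -/
import Mathlib

section
/- For every positive integer d, the generating function for the number of d-fold partition diamonds is given by ∑_{n≥0} r_d(n) q^n = ∏_{n≥1} F_d(q^{(n-1)(d+1)+1}, q) / (1 - q^n), as an identity of formal power series in q over ℤ. -/
open Finset PowerSeries

/-- A `d`-fold partition diamond: nonnegative integers `a 0, a 1, …` together with
`b k j` (representing `b_{k+1, j+1}`) satisfying `a k ≥ b k j ≥ a (k+1)`,
with all but finitely many entries equal to zero. -/
structure DFold (d : ℕ) where
  a : ℕ → ℕ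
  b : ℕ → Fin d → ℕ
  upper : ∀ k j, b k j ≤ a k
  lower : ∀ k j, a (k + 1) ≤ b k j
  fin : ∃ N, ∀ k, N ≤ k → a k = 0

/-- `rFold d n`: the number of `d`-fold partition diamonds of `n` (all nodes summed). -/
noncomputable def rFold (d n : ℕ) : ℕ :=
  Set.ncard {D : DFold d | ((∑ᶠ k, D.a k) + ∑ᶠ k, ∑ j, D.b k j) = n}

/-!
Put `α k = a k - a (k + 1)` and `β k j = b k j - a (k + 1) ≤ α k`. A `d`-fold diamond is the
same as a finitely supported sequence of such links `(α k, β k)`, and in the total `α k` is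
counted `k (d + 1) + 1` times while each `β k j` is counted once. So the generating function is
`∏ₖ M_d(q^{k (d + 1) + 1})` with `M_d(x) = ∑_α x^α [α + 1]_q^d`. Since
`(1 - q) [α + 1]_q = 1 - q^{α + 1}`, we get `(1 - q) M_{d+1}(x) = M_d(x) - q M_d(q x)`, which
after multiplication by `∏_{i ≤ d} (1 - x q^i)` is the recurrence defining `F_d`; hence
`F_d(x, q) = M_d(x) ∏_{i ≤ d} (1 - x q^i)`, and for `x = q^{k (d + 1) + 1}` these products
together make up `∏_{n ≥ 1} (1 - q^n)`.
-/

section Prod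

variable {M : Type*} [CommMonoid M]

lemma prod_Icc_one_eq_prod_range (f : ℕ → M) (N : ℕ) :
    ∏ m ∈ Icc 1 N, f m = ∏ k ∈ range N, f (k + 1) := by
  rw [← Ico_add_one_right_eq_Icc, prod_Ico_eq_prod_range, Nat.add_sub_cancel]
  simp only [add_comm 1]

lemma prod_range_prod_range_mul_add (f : ℕ → M) (c N : ℕ) :
    ∏ k ∈ range N, ∏ i ∈ range c, f (k * c + i) = ∏ j ∈ range (N * c), f j := by
  induction N with
  | zero => simp
  | succ N ih => rw [prod_range_succ, ih, add_mul, one_mul, prod_range_add]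

end Prod

lemma dvd_prod_sub_one {R ι : Type*} [CommRing R] {a : R} {s : Finset ι} {f : ι → R}
    (h : ∀ i ∈ s, a ∣ f i - 1) : a ∣ ∏ i ∈ s, f i - 1 := by
  rw [← Ideal.mem_span_singleton, ← Ideal.Quotient.eq, map_prod, map_one]
  exact prod_eq_one fun i hi => Ideal.Quotient.eq.2 (Ideal.mem_span_singleton.2 (h i hi))

section PowerSeries

variable {R : Type*} [CommRing R]

lemma coeff_eq_of_X_pow_dvd_sub {f g : R⟦X⟧} {K n : ℕ} (h : X ^ (K + 1) ∣ f - g) (hn : n ≤ K) :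
    coeff n f = coeff n g := by
  rw [← sub_eq_zero, ← map_sub]
  exact X_pow_dvd_iff.1 h n (Nat.lt_succ_of_le hn)

lemma eq_of_forall_X_pow_dvd_sub {f g : R⟦X⟧} (h : ∀ K, X ^ (K + 1) ∣ f - g) : f = g :=
  ext fun n => coeff_eq_of_X_pow_dvd_sub (h n) le_rfl

end PowerSeries

lemma finsum_eq_add_finsum_succ {M : Type*} [AddCommMonoid M] {f : ℕ → M} {N : ℕ}
    (h : ∀ k, N ≤ k → f k = 0) : ∑ᶠ k, f k = f 0 + ∑ᶠ k, f (k + 1) := by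
  have hsum (n : ℕ) (g : ℕ → M) (hg : ∀ k, n ≤ k → g k = 0) : ∑ᶠ k, g k = ∑ k ∈ range n, g k :=
    finsum_eq_sum_of_support_subset g fun k hk => by
      rw [coe_range, Set.mem_Iio]
      exact lt_of_not_ge fun h => hk (hg k h)
  rw [hsum (N + 1) f fun k hk => h k (by omega), hsum N _ fun k hk => h (k + 1) (by omega),
    sum_range_succ', add_comm]

section GenSeries

variable {α β : Type*}

-- An infinite fibre contributes the junk value `0`.
noncomputable def genSeries (w : α → ℕ) : ℤ⟦X⟧ :=
  PowerSeries.mk fun n => (Nat.card {x // w x = n} : ℤ)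

lemma coeff_genSeries (w : α → ℕ) (n : ℕ) : coeff n (genSeries w) = {x | w x = n}.ncard :=
  coeff_mk _ _

lemma genSeries_congr (e : α ≃ β) {v : α → ℕ} {w : β → ℕ} (h : ∀ x, w (e x) = v x) :
    genSeries w = genSeries v := by
  ext n
  simp only [genSeries, coeff_mk]
  exact congrArg _ (Nat.card_congr (e.subtypeEquiv fun x => by rw [h])).symm

lemma genSeries_prod_add (v : α → ℕ) (w : β → ℕ) (hv : ∀ n, Finite {x // v x = n})
    (hw : ∀ n, Finite {y // w y = n}) :
    genSeries (fun p : α × β => v p.1 + w p.2) = genSeries v * genSeries w := by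
  ext n
  let e : {p : α × β // v p.1 + w p.2 = n} ≃
      Σ q : antidiagonal n, {x // v x = q.1.1} × {y // w y = q.1.2} :=
    { toFun := fun p => ⟨⟨(v p.1.1, w p.1.2), mem_antidiagonal.2 p.2⟩, ⟨p.1.1, rfl⟩, ⟨p.1.2, rfl⟩⟩
      invFun := fun q => ⟨(q.2.1, q.2.2), by rw [q.2.1.2, q.2.2.2]; exact mem_antidiagonal.1 q.1.2⟩
      left_inv := fun p => rfl
      right_inv := by
        rintro ⟨⟨⟨i, j⟩, h⟩, ⟨x, hx⟩, ⟨y, hy⟩⟩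
        dsimp only at hx hy
        subst hx hy
        rfl }
  simp only [genSeries, coeff_mk, coeff_mul, Nat.card_congr e, Nat.card_sigma, Nat.card_prod]
  push_cast
  exact sum_coe_sort (antidiagonal n)
    fun q => (Nat.card {x // v x = q.1} : ℤ) * Nat.card {y // w y = q.2}

lemma X_pow_dvd_genSeries_sub_sum {w : α → ℕ} {K : ℕ} (s : Finset α)
    (hs : ∀ x, w x ≤ K → x ∈ s) : X ^ (K + 1) ∣ genSeries w - ∑ x ∈ s, X ^ w x := by
  refine X_pow_dvd_iff.2 fun m hm => ?_
  have hfiber : {x | w x = m} = ↑(s.filter (w · = m)) :=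
    Set.ext fun x => ⟨fun (h : w x = m) => mem_filter.2 ⟨hs x (by omega), h⟩,
      fun h => (mem_filter.1 h).2⟩
  rw [map_sub, sub_eq_zero, coeff_genSeries, hfiber, Set.ncard_coe_finset, card_filter, map_sum]
  push_cast
  exact sum_congr rfl fun x _ => by rw [coeff_X_pow]; exact if_congr eq_comm rfl rfl

lemma X_pow_dvd_genSeries_sub_one {w : α → ℕ} {x₀ : α} {t : ℕ} (h₀ : w x₀ = 0)
    (h : ∀ x, w x < t → x = x₀) : X ^ t ∣ genSeries w - 1 := by
  refine X_pow_dvd_iff.2 fun m hm => ?_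
  have hfiber : {x | w x = m} = if m = 0 then {x₀} else ∅ := by
    ext x
    split_ifs with hm0
    · subst hm0
      exact ⟨fun (hx : w x = 0) => h x (by omega), fun hx => hx ▸ h₀⟩
    · exact iff_of_false (fun (hx : w x = m) => hm0 (by rw [← hx, h x (by omega), h₀])) id
  rw [map_sub, sub_eq_zero, coeff_genSeries, coeff_one, hfiber]
  split_ifs <;> simp

end GenSeries

namespace DFold

-- `⟨α, β⟩` is the top link `a 0 - a 1 = α`, `b 0 j - a 1 = β j` of a diamond.
abbrev Link (d : ℕ) := Σ α : ℕ, Fin d → Fin (α + 1)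

variable {d : ℕ}

lemma Link.ext {ℓ ℓ' : Link d} (h : ℓ.1 = ℓ'.1) (hβ : ∀ j, (ℓ.2 j : ℕ) = ℓ'.2 j) : ℓ = ℓ' := by
  obtain ⟨α, β⟩ := ℓ
  obtain ⟨α', β'⟩ := ℓ'
  obtain rfl : α = α' := h
  exact congrArg _ (funext fun j => Fin.ext (hβ j))

def linkWeight (t : ℕ) (ℓ : Link d) : ℕ := t * ℓ.1 + ∑ j, (ℓ.2 j : ℕ)

variable (d) in
noncomputable def linkSeries (t : ℕ) : ℤ⟦X⟧ := genSeries (linkWeight (d := d) t)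

variable (d) in
noncomputable def linkPartialSum (t K : ℕ) : ℤ⟦X⟧ :=
  ∑ α ∈ range (K + 1), X ^ (t * α) * (∑ b ∈ range (α + 1), X ^ b) ^ d

lemma mem_sigma_of_linkWeight_le {t K : ℕ} (ht : 1 ≤ t) {ℓ : Link d} (h : linkWeight t ℓ ≤ K) :
    ℓ ∈ (range (K + 1)).sigma fun _ => univ := by
  have : ℓ.1 ≤ t * ℓ.1 := Nat.le_mul_of_pos_left _ ht
  simp only [mem_sigma, mem_range, mem_univ, and_true]
  unfold linkWeight at h
  omega

lemma sum_X_pow_linkWeight (t K : ℕ) :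
    ∑ ℓ ∈ (range (K + 1)).sigma (fun _ => univ), X ^ linkWeight (d := d) t ℓ =
      linkPartialSum d t K := by
  rw [sum_sigma]
  refine sum_congr rfl fun α _ => ?_
  rw [← Fin.sum_univ_eq_sum_range, Fintype.sum_pow, mul_sum]
  refine sum_congr rfl fun β _ => ?_
  rw [linkWeight, pow_add, prod_pow_eq_pow_sum]

lemma finite_linkWeight_fiber {t : ℕ} (ht : 1 ≤ t) (n : ℕ) :
    Finite {ℓ : Link d // linkWeight t ℓ = n} :=
  (((range (n + 1)).sigma fun _ => univ).finite_toSet.subset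
    fun ℓ (h : linkWeight t ℓ = n) => mem_sigma_of_linkWeight_le ht h.le).to_subtype

lemma X_pow_dvd_linkSeries_sub {t : ℕ} (ht : 1 ≤ t) (K : ℕ) :
    X ^ (K + 1) ∣ linkSeries d t - linkPartialSum d t K := by
  rw [← sum_X_pow_linkWeight]
  exact X_pow_dvd_genSeries_sub_sum _ fun ℓ h => mem_sigma_of_linkWeight_le ht h

lemma one_sub_X_mul_linkPartialSum_succ (t K : ℕ) :
    (1 - X) * linkPartialSum (d + 1) t K =
      linkPartialSum d t K - X * linkPartialSum d (t + 1) K := by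
  simp only [linkPartialSum, mul_sum, ← sum_sub_distrib]
  refine sum_congr rfl fun α _ => ?_
  linear_combination
    X ^ (t * α) * (∑ b ∈ range (α + 1), X ^ b) ^ d * mul_neg_geom_sum (X : ℤ⟦X⟧) (α + 1)

lemma one_sub_X_pow_mul_linkPartialSum_zero (t K : ℕ) :
    (1 - X ^ t) * linkPartialSum 0 t K = 1 - X ^ (t * (K + 1)) := by
  simp only [linkPartialSum, pow_zero, mul_one, pow_mul]
  exact mul_neg_geom_sum _ _

lemma one_sub_X_mul_linkSeries_succ {t : ℕ} (ht : 1 ≤ t) :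
    (1 - X) * linkSeries (d + 1) t = linkSeries d t - X * linkSeries d (t + 1) := by
  refine eq_of_forall_X_pow_dvd_sub fun K => ?_
  have h₁ := X_pow_dvd_linkSeries_sub (d := d + 1) ht K
  have h₂ := X_pow_dvd_linkSeries_sub (d := d) ht K
  have h₃ := X_pow_dvd_linkSeries_sub (d := d) (ht.trans (Nat.le_add_right t 1)) K
  rw [show (1 - X) * linkSeries (d + 1) t - (linkSeries d t - X * linkSeries d (t + 1)) =
      (1 - X) * (linkSeries (d + 1) t - linkPartialSum (d + 1) t K)
        - (linkSeries d t - linkPartialSum d t K)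
        + X * (linkSeries d (t + 1) - linkPartialSum d (t + 1) K) by
    linear_combination one_sub_X_mul_linkPartialSum_succ (d := d) t K]
  exact dvd_add (dvd_sub (h₁.mul_left _) h₂) (h₃.mul_left _)

lemma one_sub_X_pow_mul_linkSeries_zero {t : ℕ} (ht : 1 ≤ t) :
    (1 - X ^ t) * linkSeries 0 t = 1 := by
  refine eq_of_forall_X_pow_dvd_sub fun K => ?_
  rw [show (1 - X ^ t) * linkSeries 0 t - 1 =
      (1 - X ^ t) * (linkSeries 0 t - linkPartialSum 0 t K) - X ^ (t * (K + 1)) by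
    linear_combination one_sub_X_pow_mul_linkPartialSum_zero t K]
  exact dvd_sub ((X_pow_dvd_linkSeries_sub ht K).mul_left _)
    (pow_dvd_pow _ (Nat.le_mul_of_pos_left _ ht))

lemma aeval_X_pow_aeval_X_mul_X (t : ℕ) (p : MvPolynomial (Fin 2) ℤ) :
    MvPolynomial.aeval ![(X : ℤ⟦X⟧) ^ t, X]
        (MvPolynomial.aeval
          ![(MvPolynomial.X 0 * MvPolynomial.X 1 : MvPolynomial (Fin 2) ℤ), MvPolynomial.X 1] p) =
      MvPolynomial.aeval ![(X : ℤ⟦X⟧) ^ (t + 1), X] p := by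
  rw [MvPolynomial.comp_aeval_apply]
  congr 2
  funext i
  fin_cases i <;> simp [pow_succ]

lemma aeval_eq_linkSeries_mul_prod (F : ℕ → MvPolynomial (Fin 2) ℤ) (hF1 : F 1 = 1)
    (hFrec : ∀ e, 1 ≤ e →
      (1 - MvPolynomial.X 1) * F (e + 1) =
        (1 - MvPolynomial.X 0 * MvPolynomial.X 1 ^ (e + 1)) * F e
          - MvPolynomial.X 1 * (1 - MvPolynomial.X 0) *
            MvPolynomial.aeval ![MvPolynomial.X 0 * MvPolynomial.X 1, MvPolynomial.X 1] (F e))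
    {e : ℕ} (he : 1 ≤ e) {t : ℕ} (ht : 1 ≤ t) :
    MvPolynomial.aeval ![(X : ℤ⟦X⟧) ^ t, X] (F e) =
      linkSeries e t * ∏ i ∈ range (e + 1), (1 - X ^ (t + i)) := by
  have hX : (1 - X : ℤ⟦X⟧) ≠ 0 := fun h => by simpa using congrArg (coeff 1) h
  induction e, he using Nat.le_induction generalizing t with
  | base =>
    refine mul_left_cancel₀ hX ?_
    rw [hF1, map_one, prod_range_succ, prod_range_one, add_zero]
    linear_combination
      (-(1 - X ^ t) * (1 - X ^ (t + 1))) * one_sub_X_mul_linkSeries_succ (d := 0) ht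
      - (1 - X ^ (t + 1)) * one_sub_X_pow_mul_linkSeries_zero ht
      + X * (1 - X ^ t) * one_sub_X_pow_mul_linkSeries_zero (ht.trans (Nat.le_add_right t 1))
  | succ e he ih =>
    have hrec := congrArg (MvPolynomial.aeval ![(X : ℤ⟦X⟧) ^ t, X]) (hFrec e he)
    simp only [map_mul, map_sub, map_one, map_pow, MvPolynomial.aeval_X, aeval_X_pow_aeval_X_mul_X,
      Matrix.cons_val_zero, Matrix.cons_val_one] at hrec
    rw [ih ht, ih (ht.trans (Nat.le_add_right t 1))] at hrec
    refine mul_left_cancel₀ hX ?_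
    rw [hrec]
    have hlow : ∏ i ∈ range (e + 1 + 1), (1 - (X : ℤ⟦X⟧) ^ (t + i)) =
        (1 - X ^ t) * ∏ i ∈ range (e + 1), (1 - X ^ (t + 1 + i)) := by
      rw [prod_range_succ', mul_comm]
      simp only [add_zero, add_assoc, add_comm 1]
    linear_combination (-(∏ i ∈ range (e + 1 + 1), (1 - (X : ℤ⟦X⟧) ^ (t + i)))) *
        one_sub_X_mul_linkSeries_succ (d := e) ht
      - linkSeries e t * prod_range_succ (fun i => 1 - (X : ℤ⟦X⟧) ^ (t + i)) (e + 1)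
      + X * linkSeries e (t + 1) * hlow

lemma ext {D D' : DFold d} (ha : D.a = D'.a) (hb : D.b = D'.b) : D = D' := by
  cases D; cases D'; cases ha; cases hb; rfl

lemma b_eq_zero (D : DFold d) {k : ℕ} (h : D.a k = 0) (j : Fin d) : D.b k j = 0 :=
  Nat.eq_zero_of_le_zero (h ▸ D.upper k j)

lemma a_antitone (hd : 1 ≤ d) (D : DFold d) : Antitone D.a :=
  antitone_nat_of_succ_le fun k => (D.lower k ⟨0, hd⟩).trans (D.upper k ⟨0, hd⟩)

noncomputable def size (D : DFold d) : ℕ := (∑ᶠ k, D.a k) + ∑ᶠ k, ∑ j, D.b k j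

-- `a 0` is counted `s + 1` times: removing the top link of a diamond raises the multiplicity of
-- the new top node by `d + 1`.
noncomputable def weight (s : ℕ) (D : DFold d) : ℕ := s * D.a 0 + D.size

def tail (D : DFold d) : DFold d where
  a k := D.a (k + 1)
  b k := D.b (k + 1)
  upper k := D.upper (k + 1)
  lower k := D.lower (k + 1)
  fin := let ⟨N, hN⟩ := D.fin; ⟨N, fun k hk => hN (k + 1) (by omega)⟩

lemma size_eq_add_size_tail (D : DFold d) : D.size = D.a 0 + ∑ j, D.b 0 j + D.tail.size := by
  obtain ⟨N, hN⟩ := D.fin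
  rw [size, size, finsum_eq_add_finsum_succ hN,
    finsum_eq_add_finsum_succ fun k hk => sum_eq_zero fun j _ => D.b_eq_zero (hN k hk) j]
  simp only [tail]
  ring

lemma a_zero_le_size (D : DFold d) : D.a 0 ≤ D.size := by
  rw [size_eq_add_size_tail]
  omega

lemma b_le_size (hd : 1 ≤ d) (D : DFold d) (k : ℕ) (j : Fin d) : D.b k j ≤ D.size :=
  ((D.upper k j).trans (D.a_antitone hd k.zero_le)).trans D.a_zero_le_size

lemma a_le_size (hd : 1 ≤ d) (D : DFold d) (k : ℕ) : D.a k ≤ D.size :=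
  (D.a_antitone hd k.zero_le).trans D.a_zero_le_size

lemma lt_size_of_a_ne_zero (hd : 1 ≤ d) : ∀ {D : DFold d} {k : ℕ}, D.a k ≠ 0 → k < D.size
  | D, 0, h => Nat.pos_of_ne_zero h |>.trans_le D.a_zero_le_size
  | D, k + 1, h => by
    have htail : k < D.tail.size := lt_size_of_a_ne_zero hd (D := D.tail) h
    have ha : 1 ≤ D.a 0 := (Nat.pos_of_ne_zero h).trans_le (D.a_antitone hd k.succ.zero_le)
    rw [size_eq_add_size_tail]
    omega

lemma finite_weight_fiber (hd : 1 ≤ d) (s n : ℕ) : Finite {D : DFold d // D.weight s = n} := by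
  have hsize (D : {D : DFold d // D.weight s = n}) : D.1.size ≤ n := by
    have := D.2
    unfold weight at this
    omega
  have hhigh (D : {D : DFold d // D.weight s = n}) (k : ℕ) (hk : n < k) :
      D.1.a k = 0 ∧ D.1.b k = 0 := by
    have ha : D.1.a k = 0 := by
      by_contra h
      exact absurd (lt_size_of_a_ne_zero hd h) (by have := hsize D; omega)
    exact ⟨ha, funext (D.1.b_eq_zero ha)⟩
  refine Finite.of_injective (β := Fin (n + 1) → Fin (n + 1) × (Fin d → Fin (n + 1)))
    (fun D k => (⟨D.1.a k, Nat.lt_succ_of_le ((D.1.a_le_size hd k).trans (hsize D))⟩,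
      fun j => ⟨D.1.b k j, Nat.lt_succ_of_le ((D.1.b_le_size hd k j).trans (hsize D))⟩)) ?_
  intro D D' h
  have hlow (k : ℕ) (hk : k ≤ n) : D.1.a k = D'.1.a k ∧ D.1.b k = D'.1.b k := by
    have := congrFun h ⟨k, Nat.lt_succ_of_le hk⟩
    simp only [Prod.mk.injEq, Fin.mk.injEq, funext_iff] at this
    exact ⟨this.1, funext this.2⟩
  have hall (k : ℕ) : D.1.a k = D'.1.a k ∧ D.1.b k = D'.1.b k := by
    rcases le_or_gt k n with hk | hk
    · exact hlow k hk
    · rw [(hhigh D k hk).1, (hhigh D k hk).2, (hhigh D' k hk).1, (hhigh D' k hk).2]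
      exact ⟨rfl, rfl⟩
  exact Subtype.ext (ext (funext fun k => (hall k).1) (funext fun k => (hall k).2))

instance : Zero (DFold d) := ⟨⟨0, 0, fun _ _ => le_rfl, fun _ _ => le_rfl, ⟨0, fun _ _ => rfl⟩⟩⟩

lemma weight_zero (s : ℕ) : (0 : DFold d).weight s = 0 := by
  show s * 0 + ((∑ᶠ _ : ℕ, (0 : ℕ)) + ∑ᶠ _ : ℕ, ∑ _ : Fin d, (0 : ℕ)) = 0
  simp

lemma eq_zero_of_weight_lt (hd : 1 ≤ d) {s : ℕ} {D : DFold d} (h : D.weight s < s + 1) :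
    D = 0 := by
  have ha0 : D.a 0 = 0 := by
    by_contra h0
    have := Nat.mul_le_mul_left s (Nat.one_le_iff_ne_zero.2 h0)
    have := D.a_zero_le_size
    unfold weight at h
    omega
  have ha (k : ℕ) : D.a k = 0 := Nat.eq_zero_of_le_zero (ha0 ▸ D.a_antitone hd k.zero_le)
  exact ext (funext ha) (funext fun k => funext (D.b_eq_zero (ha k)))

def cons (ℓ : Link d) (D : DFold d) : DFold d where
  a | 0 => ℓ.1 + D.a 0 | k + 1 => D.a k
  b | 0 => fun j => ℓ.2 j + D.a 0 | k + 1 => D.b k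
  upper | 0, j => Nat.add_le_add_right (Fin.is_le (ℓ.2 j)) _ | k + 1, j => D.upper k j
  lower | 0, _ => Nat.le_add_left _ _ | k + 1, j => D.lower k j
  fin := let ⟨N, hN⟩ := D.fin
    ⟨N + 1, fun | 0, h => absurd h (by omega) | k + 1, h => hN k (by omega)⟩

def head (D : DFold d) : Link d :=
  ⟨D.a 0 - D.a 1, fun j => ⟨D.b 0 j - D.a 1, by have := D.upper 0 j; omega⟩⟩

def peelEquiv (hd : 1 ≤ d) : DFold d ≃ Link d × DFold d where
  toFun D := (D.head, D.tail)
  invFun p := cons p.1 p.2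
  left_inv D := by
    have ha : D.a 1 ≤ D.a 0 := D.a_antitone hd zero_le_one
    refine ext (funext fun | 0 => ?_ | k + 1 => rfl) (funext fun | 0 => ?_ | k + 1 => rfl)
    · exact Nat.sub_add_cancel ha
    · exact funext fun j => Nat.sub_add_cancel (D.lower 0 j)
  right_inv p := Prod.ext (Link.ext (Nat.add_sub_cancel _ _) fun j => Nat.add_sub_cancel _ _) rfl

lemma weight_cons (s : ℕ) (ℓ : Link d) (D : DFold d) :
    (cons ℓ D).weight s = linkWeight (s + 1) ℓ + D.weight (s + d + 1) := by
  rw [weight, size_eq_add_size_tail]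
  change s * (ℓ.1 + D.a 0) + (ℓ.1 + D.a 0 + ∑ j, ((ℓ.2 j : ℕ) + D.a 0) + D.size) = _
  rw [sum_add_distrib, sum_const, card_univ, Fintype.card_fin, smul_eq_mul, linkWeight, weight]
  ring

lemma genSeries_weight_eq_linkSeries_mul (hd : 1 ≤ d) (s : ℕ) :
    genSeries (weight (d := d) s) =
      linkSeries d (s + 1) * genSeries (weight (d := d) (s + d + 1)) := by
  rw [linkSeries, ← genSeries_prod_add _ _ (finite_linkWeight_fiber (Nat.le_add_left 1 s))
    (finite_weight_fiber hd _)]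
  exact genSeries_congr (peelEquiv hd).symm fun p => weight_cons s p.1 p.2

lemma genSeries_weight_eq_prod (hd : 1 ≤ d) (s N : ℕ) :
    genSeries (weight (d := d) s) =
      (∏ k ∈ range N, linkSeries d (s + k * (d + 1) + 1)) *
        genSeries (weight (d := d) (s + N * (d + 1))) := by
  induction N generalizing s with
  | zero => simp
  | succ N ih =>
    rw [genSeries_weight_eq_linkSeries_mul hd, ih, prod_range_succ']
    have hidx (k : ℕ) : s + d + 1 + k * (d + 1) + 1 = s + (k + 1) * (d + 1) + 1 := by ring
    simp only [hidx, zero_mul, add_zero,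
      show s + d + 1 + N * (d + 1) = s + (N + 1) * (d + 1) by ring]
    ring

lemma X_pow_dvd_genSeries_weight_sub_one (hd : 1 ≤ d) (s : ℕ) :
    X ^ (s + 1) ∣ genSeries (weight (d := d) s) - 1 :=
  X_pow_dvd_genSeries_sub_one (weight_zero s) fun _ h => eq_zero_of_weight_lt hd h

lemma genSeries_weight_zero_eq_rFold :
    genSeries (weight (d := d) 0) = PowerSeries.mk fun n => (rFold d n : ℤ) := by
  rw [show weight (d := d) 0 = size from funext fun D => by rw [weight, zero_mul, zero_add]]
  rfl

lemma X_pow_dvd_rFold_sub_prod_linkSeries (hd : 1 ≤ d) (N : ℕ) :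
    X ^ (N * (d + 1) + 1) ∣
      PowerSeries.mk (fun n => (rFold d n : ℤ)) -
        ∏ k ∈ range N, linkSeries d (k * (d + 1) + 1) := by
  have hprod := genSeries_weight_eq_prod hd 0 N
  simp only [zero_add] at hprod
  rw [← genSeries_weight_zero_eq_rFold, hprod, ← mul_sub_one]
  exact (X_pow_dvd_genSeries_weight_sub_one hd _).mul_left _

end DFold

open DFold

/-- The product formula with denominators cleared, compared coefficient-wise: for `n ≤ N` only the
first `N` factors matter, since every further factor on either side is `1 + O(q^{N+1})`. -/
theorem dfold_generating_function (d : ℕ) (hd : 1 ≤ d)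
    (F : ℕ → MvPolynomial (Fin 2) ℤ)
    (hF1 : F 1 = 1)
    (hFrec : ∀ e, 1 ≤ e →
      (1 - MvPolynomial.X 1) * F (e + 1) =
        (1 - MvPolynomial.X 0 * MvPolynomial.X 1 ^ (e + 1)) * F e
          - MvPolynomial.X 1 * (1 - MvPolynomial.X 0) *
            MvPolynomial.aeval ![MvPolynomial.X 0 * MvPolynomial.X 1, MvPolynomial.X 1] (F e))
    (n N : ℕ) (hnN : n ≤ N) :
    PowerSeries.coeff (R := ℤ) n
        ((PowerSeries.mk fun m => (rFold d m : ℤ)) *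
          ∏ m ∈ Finset.Icc 1 N, (1 - (X : ℤ⟦X⟧) ^ m)) =
      PowerSeries.coeff (R := ℤ) n
        (∏ m ∈ Finset.Icc 1 N,
          MvPolynomial.aeval ![(X : ℤ⟦X⟧) ^ ((m - 1) * (d + 1) + 1), (X : ℤ⟦X⟧)] (F d)) := by
  have hN : N ≤ N * (d + 1) := Nat.le_mul_of_pos_right N d.succ_pos
  have hfactor (k : ℕ) : MvPolynomial.aeval ![(X : ℤ⟦X⟧) ^ ((k + 1 - 1) * (d + 1) + 1), X] (F d) =
      linkSeries d (k * (d + 1) + 1) *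
        ∏ i ∈ range (d + 1), (1 - X ^ (k * (d + 1) + i + 1)) := by
    rw [Nat.add_sub_cancel, aeval_eq_linkSeries_mul_prod F hF1 hFrec hd (Nat.le_add_left 1 _)]
    simp only [add_right_comm _ 1]
  rw [prod_Icc_one_eq_prod_range, prod_Icc_one_eq_prod_range, prod_congr rfl fun k _ => hfactor k,
    prod_mul_distrib, prod_range_prod_range_mul_add (fun j => 1 - X ^ (j + 1)),
    ← prod_range_mul_prod_Ico _ hN]
  set P := ∏ k ∈ range N, linkSeries d (k * (d + 1) + 1)
  set Q := ∏ j ∈ range N, (1 - (X : ℤ⟦X⟧) ^ (j + 1))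
  set Q' := ∏ j ∈ Ico N (N * (d + 1)), (1 - (X : ℤ⟦X⟧) ^ (j + 1))
  have hP : X ^ (N + 1) ∣ PowerSeries.mk (fun m => (rFold d m : ℤ)) - P :=
    (pow_dvd_pow X (Nat.add_le_add_right hN 1)).trans (X_pow_dvd_rFold_sub_prod_linkSeries hd N)
  have hQ' : X ^ (N + 1) ∣ Q' - 1 :=
    dvd_prod_sub_one fun j hj => by
      rw [sub_sub_cancel_left, dvd_neg]
      exact pow_dvd_pow X (Nat.succ_le_succ (mem_Ico.1 hj).1)
  refine coeff_eq_of_X_pow_dvd_sub ?_ hnN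
  rw [show PowerSeries.mk (fun m => (rFold d m : ℤ)) * Q - P * (Q * Q') =
    (PowerSeries.mk (fun m => (rFold d m : ℤ)) - P) * Q - P * Q * (Q' - 1) by ring]
  exact dvd_sub (hP.mul_right Q) (hQ'.mul_left _)
end

section
/- The generating function for the number of Schmidt type 2-fold partition diamonds satisfies ∑_{n≥0} s_2(n) q^n = ∏_{n≥1} (1 + q^n) / (1 - q^n)^3, as an identity of formal power series in q over ℤ. -/
open Finset PowerSeries

/-- `sFold d n`: the number of Schmidt type `d`-fold partition diamonds of `n`
(only the links `a k` are summed). -/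
noncomputable def sFold (d n : ℕ) : ℕ :=
  Set.ncard {D : DFold d | (∑ᶠ k, D.a k) = n}

/-!
Links `a₀ ≥ a₁ ≥ ⋯` of total `n` are determined by the gaps `μₖ = a_{k-1} - aₖ`, with
`∑ aₖ = ∑ k μₖ`, and given the links each `b_{k,j}` ranges independently over an interval of
`μₖ + 1` values. Hence `∑ s_d(n) qⁿ = ∏ₖ ∑_μ (μ + 1)^d q^{kμ}`. For `d = 2`, the inner series is
`x ↦ x^k` applied to `∑ (m + 1)² xᵐ = (1 + x) / (1 - x)³`.
-/

attribute [ext] DFold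

section Series

variable {R : Type*}

theorem Nat.choose_two_add_choose_two (m : ℕ) :
    (m + 2).choose 2 + (m + 1).choose 2 = (m + 1) ^ 2 := by
  induction m with
  | zero => rfl
  | succ m ih =>
    have h₁ := Nat.choose_succ_succ' (m + 2) 1
    have h₂ := Nat.choose_succ_succ' (m + 1) 1
    simp only [Nat.choose_one_right] at h₁ h₂
    linarith

theorem PowerSeries.mk_add_one_sq_mul_one_sub_X_pow_three [CommRing R] :
    (mk fun m => ((m + 1 : ℕ) : R) ^ 2) * (1 - X) ^ 3 = 1 + X := by
  have h : (mk fun m => ((m + 1 : ℕ) : R) ^ 2) = (1 + X) * PowerSeries.mk 1 ^ 3 := by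
    rw [mk_one_pow_eq_mk_choose_add]
    ext (_ | m)
    · simp
    · simp only [add_mul, one_mul, map_add, coeff_succ_X_mul, coeff_mk]
      rw [add_comm 2, add_comm 2, ← Nat.cast_add, Nat.choose_two_add_choose_two]
      push_cast
      ring
  rw [h, mul_assoc, ← mul_pow, mk_one_mul_one_sub_eq_one, one_pow, mul_one]

/-- `∑_μ (μ + 1)^d q^{kμ}`, the contribution of the gap `μ = a_{k-1} - aₖ` of a `d`-fold diamond. -/
noncomputable def layerSeries [Semiring R] (d k : ℕ) : R⟦X⟧ :=
  mk fun m => if k ∣ m then ((m / k + 1 : ℕ) : R) ^ d else 0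

theorem layerSeries_eq_expand [CommRing R] (d : ℕ) {k : ℕ} (hk : k ≠ 0) :
    layerSeries d k = expand k hk (mk fun m => ((m + 1 : ℕ) : R) ^ d) := by
  ext m
  rw [layerSeries, coeff_mk, coeff_expand, coeff_mk]

theorem layerSeries_two_mul_one_sub_X_pow_pow_three [CommRing R] {k : ℕ} (hk : k ≠ 0) :
    layerSeries 2 k * (1 - X ^ k) ^ 3 = (1 + X ^ k : R⟦X⟧) := by
  simpa [layerSeries_eq_expand 2 hk] using
    congrArg (expand k hk) (mk_add_one_sq_mul_one_sub_X_pow_three (R := R))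

def divisibleAntidiag (s : Finset ℕ) (n : ℕ) : Finset (ℕ →₀ ℕ) :=
  (s.finsuppAntidiag n).filter fun l => ∀ k ∈ s, k ∣ l k

theorem mem_divisibleAntidiag {s : Finset ℕ} {n : ℕ} {l : ℕ →₀ ℕ} :
    l ∈ divisibleAntidiag s n ↔ (∑ k ∈ s, l k = n ∧ l.support ⊆ s) ∧ ∀ k ∈ s, k ∣ l k := by
  rw [divisibleAntidiag, mem_filter, mem_finsuppAntidiag]

theorem sum_mul_div_of_mem_divisibleAntidiag {s : Finset ℕ} {n : ℕ} {l : ℕ →₀ ℕ}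
    (hl : l ∈ divisibleAntidiag s n) : ∑ k ∈ s, k * (l k / k) = n := by
  obtain ⟨⟨hsum, -⟩, hdvd⟩ := mem_divisibleAntidiag.mp hl
  rw [← hsum]
  exact sum_congr rfl fun k hk => Nat.mul_div_cancel' (hdvd k hk)

theorem coeff_prod_layerSeries [CommSemiring R] (d : ℕ) (s : Finset ℕ) (n : ℕ) :
    coeff n (∏ k ∈ s, layerSeries d k : R⟦X⟧) =
      ∑ l ∈ divisibleAntidiag s n, ∏ k ∈ s, ((l k / k + 1 : ℕ) : R) ^ d := by
  rw [coeff_prod]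
  refine (sum_filter_of_ne fun l _ hl k hk => ?_).symm.trans (sum_congr rfl fun l hl => ?_)
  · by_contra hdvd
    exact hl (prod_eq_zero hk (by rw [layerSeries, coeff_mk, if_neg hdvd]))
  · refine prod_congr rfl fun k hk => ?_
    rw [layerSeries, coeff_mk, if_pos ((mem_filter.mp hl).2 k hk)]

theorem PowerSeries.coeff_mul_eq_of_coeff_eq [Semiring R] {f g : R⟦X⟧} {n : ℕ}
    (h : ∀ i ≤ n, coeff i f = coeff i g) (φ : R⟦X⟧) : coeff n (f * φ) = coeff n (g * φ) := by
  simp only [coeff_mul]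
  exact sum_congr rfl fun p hp => by rw [h p.1 (HasAntidiagonal.antidiagonal.fst_le hp)]

end Series

def tailSum (N : ℕ) (μ : ℕ → ℕ) (k : ℕ) : ℕ := ∑ j ∈ Icc (k + 1) N, μ j

namespace tailSum

variable {N : ℕ} {μ : ℕ → ℕ} {k : ℕ}

theorem of_le (hk : N ≤ k) : tailSum N μ k = 0 := by
  rw [tailSum, Icc_eq_empty (by omega), sum_empty]

theorem eq_add_succ (hk : k < N) : tailSum N μ k = μ (k + 1) + tailSum N μ (k + 1) := by
  rw [tailSum, tailSum, ← insert_Icc_add_one_left_eq_Icc (by omega), sum_insert (by simp)]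

theorem apply_eq_sub (hk : k ∈ Icc 1 N) : μ k = tailSum N μ (k - 1) - tailSum N μ k := by
  obtain ⟨h₁, h₂⟩ := mem_Icc.mp hk
  rw [eq_add_succ (μ := μ) (k := k - 1) (by omega), Nat.sub_add_cancel h₁, Nat.add_sub_cancel]

theorem congr {ν : ℕ → ℕ} (h : ∀ j ∈ Icc 1 N, μ j = ν j) : tailSum N μ = tailSum N ν :=
  funext fun _ => sum_congr rfl fun j hj => h j (by simp at hj ⊢; omega)

theorem sum_range (N : ℕ) (μ : ℕ → ℕ) :
    ∑ k ∈ range N, tailSum N μ k = ∑ j ∈ Icc 1 N, j * μ j := by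
  simp only [tailSum]
  rw [sum_comm' (t' := Icc 1 N) (s' := range)]
  · simp
  · intro k j
    simp only [mem_range, mem_Icc]
    omega

theorem of_sub_succ {f : ℕ → ℕ} (hf : Antitone f) (hfN : f N = 0) :
    tailSum N (fun j => f (j - 1) - f j) = f := by
  funext k
  rcases le_or_gt N k with hk | hk
  · rw [of_le hk]
    exact (Nat.eq_zero_of_le_zero (hfN ▸ hf hk)).symm
  refine Nat.decreasingInduction (motive := fun k _ => tailSum N _ k = f k)
    (fun k hk ih => ?_) (by rw [of_le le_rfl, hfN]) hk.le
  rw [eq_add_succ hk, ih, Nat.add_sub_cancel]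
  exact Nat.sub_add_cancel (hf k.le_succ)

end tailSum

section Diamonds

variable {d n N : ℕ} {μ : ℕ → ℕ}

def extendChoice (c : ∀ k : Icc 1 N, Fin d → Fin (μ k + 1)) (k : ℕ) (j : Fin d) : ℕ :=
  if h : k ∈ Icc 1 N then c ⟨k, h⟩ j else 0

theorem extendChoice_le (c : ∀ k : Icc 1 N, Fin d → Fin (μ k + 1)) (k : ℕ) (j : Fin d) :
    extendChoice c k j ≤ μ k := by
  unfold extendChoice
  split_ifs
  exacts [Fin.is_le _, Nat.zero_le _]

namespace DFold

theorem antitone_a [NeZero d] (D : DFold d) : Antitone D.a :=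
  antitone_nat_of_succ_le fun k => (D.lower k 0).trans (D.upper k 0)

theorem finsum_a_eq_sum_range (D : DFold d) (hN : ∀ k, N ≤ k → D.a k = 0) :
    ∑ᶠ k, D.a k = ∑ k ∈ range N, D.a k :=
  finsum_eq_sum_of_support_subset _ fun k hk => by
    by_contra h
    exact hk (hN k (by simpa using h))

theorem a_eq_zero_of_le [NeZero d] (D : DFold d) (hD : ∑ᶠ k, D.a k = n) {k : ℕ}
    (hk : n ≤ k) : D.a k = 0 := by
  by_contra h
  obtain ⟨M, hM⟩ := D.fin
  have hsum := D.finsum_a_eq_sum_range (N := max M (k + 1)) fun i hi => hM i (le_of_max_le_left hi)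
  have : k + 1 ≤ ∑ i ∈ range (max M (k + 1)), D.a i :=
    calc k + 1 = #(range (k + 1)) • 1 := by simp
      _ ≤ ∑ i ∈ range (k + 1), D.a i := card_nsmul_le_sum _ _ _ fun i hi =>
          Nat.one_le_iff_ne_zero.mpr fun h0 =>
            h (Nat.eq_zero_of_le_zero (h0 ▸ D.antitone_a (Nat.le_of_lt_succ (mem_range.mp hi))))
      _ ≤ _ := sum_le_sum_of_subset (range_subset_range.mpr (le_max_right _ _))
  omega

def ofGaps (N : ℕ) (μ : ℕ → ℕ) (c : ∀ k : Icc 1 N, Fin d → Fin (μ k + 1)) : DFold d where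
  a := tailSum N μ
  b k j := tailSum N μ (k + 1) + extendChoice c (k + 1) j
  upper k j := by
    rcases lt_or_ge k N with hk | hk
    · rw [tailSum.eq_add_succ hk, add_comm]
      exact Nat.add_le_add_right (extendChoice_le c _ j) _
    · have : k + 1 ∉ Icc 1 N := by simp; omega
      simp [extendChoice, this, tailSum.of_le hk, tailSum.of_le (hk.trans k.le_succ)]
  lower _ _ := Nat.le_add_right _ _
  fin := ⟨N, fun _ hk => tailSum.of_le hk⟩

theorem finsum_ofGaps_a (c : ∀ k : Icc 1 N, Fin d → Fin (μ k + 1)) :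
    ∑ᶠ k, (ofGaps N μ c).a k = ∑ j ∈ Icc 1 N, j * μ j := by
  rw [finsum_a_eq_sum_range _ fun _ hk => tailSum.of_le hk]
  exact tailSum.sum_range N μ

/-- The gaps scaled by `k`, the form in which they appear in `coeff_prod_layerSeries`. -/
noncomputable def gapFinsupp (N : ℕ) (D : DFold d) : ℕ →₀ ℕ :=
  Finsupp.indicator (Icc 1 N) fun k _ => k * (D.a (k - 1) - D.a k)

theorem gapFinsupp_apply (D : DFold d) {k : ℕ} (hk : k ∈ Icc 1 N) :
    D.gapFinsupp N k = k * (D.a (k - 1) - D.a k) :=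
  Finsupp.indicator_of_mem hk _

theorem gapFinsupp_div (D : DFold d) {k : ℕ} (hk : k ∈ Icc 1 N) :
    D.gapFinsupp N k / k = D.a (k - 1) - D.a k := by
  rw [gapFinsupp_apply D hk, Nat.mul_div_cancel_left _ (by simp at hk; omega)]

theorem tailSum_gapFinsupp_div [NeZero d] (D : DFold d) (hD : ∑ᶠ k, D.a k = n) (hN : n ≤ N) :
    tailSum N (fun k => D.gapFinsupp N k / k) = D.a := by
  rw [tailSum.congr fun k hk => D.gapFinsupp_div hk]
  exact tailSum.of_sub_succ D.antitone_a (D.a_eq_zero_of_le hD hN)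

theorem gapFinsupp_mem_divisibleAntidiag [NeZero d] (D : DFold d) (hD : ∑ᶠ k, D.a k = n)
    (hN : n ≤ N) : D.gapFinsupp N ∈ divisibleAntidiag (Icc 1 N) n := by
  refine mem_divisibleAntidiag.mpr ⟨⟨?_, Finsupp.support_indicator_subset _ _⟩, fun k hk => ?_⟩
  · rw [sum_congr rfl fun k hk => (Nat.mul_div_cancel' ⟨_, D.gapFinsupp_apply hk⟩).symm,
      ← tailSum.sum_range, D.tailSum_gapFinsupp_div hD hN, ← hD,
      D.finsum_a_eq_sum_range fun k hk => D.a_eq_zero_of_le hD (hN.trans hk)]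
  · exact ⟨_, D.gapFinsupp_apply hk⟩

end DFold

/-- A diamond of weight `n` with `n ≤ N` is encoded by `l = gapFinsupp N D` and the offsets
`c k j = b_{k-1,j} - aₖ`. -/
abbrev DiamondData (d n N : ℕ) : Type :=
  Σ l : divisibleAntidiag (Icc 1 N) n, ∀ k : Icc 1 N, Fin d → Fin (l.1 k / k + 1)

noncomputable def DiamondData.toDFold (x : DiamondData d n N) :
    {D : DFold d // ∑ᶠ k, D.a k = n} :=
  ⟨DFold.ofGaps N (fun k => x.1.1 k / k) x.2, by
    rw [DFold.finsum_ofGaps_a, sum_mul_div_of_mem_divisibleAntidiag x.1.2]⟩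

theorem DiamondData.toDFold_injective :
    Function.Injective (toDFold (d := d) (n := n) (N := N)) := by
  rintro ⟨⟨l, hl⟩, c⟩ ⟨⟨l', hl'⟩, c'⟩ h
  have hD := congrArg Subtype.val h
  have ha : tailSum N (fun k => l k / k) = tailSum N (fun k => l' k / k) := congrArg DFold.a hD
  obtain rfl : l = l' := by
    rw [mem_divisibleAntidiag] at hl hl'
    ext k
    by_cases hk : k ∈ Icc 1 N
    · rw [← Nat.mul_div_cancel' (hl.2 k hk), ← Nat.mul_div_cancel' (hl'.2 k hk),
        tailSum.apply_eq_sub (μ := fun k => l k / k) hk,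
        tailSum.apply_eq_sub (μ := fun k => l' k / k) hk, ha]
    · rw [Finsupp.notMem_support_iff.mp fun h => hk (hl.1.2 h),
        Finsupp.notMem_support_iff.mp fun h => hk (hl'.1.2 h)]
  obtain rfl : c = c' := by
    funext ⟨k, hk⟩ j
    obtain ⟨k, rfl⟩ := Nat.exists_eq_add_one_of_ne_zero (by simp at hk; omega : k ≠ 0)
    have hb := congrFun (congrFun (congrArg DFold.b hD) k) j
    simp only [DiamondData.toDFold, DFold.ofGaps, extendChoice, dif_pos hk, add_right_inj] at hb
    exact Fin.ext hb
  rfl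

theorem DiamondData.toDFold_surjective [NeZero d] (hN : n ≤ N) :
    Function.Surjective (toDFold (d := d) (n := n) (N := N)) := by
  rintro ⟨D, hD⟩
  have ha := D.tailSum_gapFinsupp_div hD hN
  have hc (k : Icc 1 N) (j : Fin d) : D.b (k - 1) j - D.a k < D.gapFinsupp N k / k + 1 := by
    rw [D.gapFinsupp_div k.2]
    have := D.upper (k - 1) j
    omega
  refine ⟨⟨⟨_, D.gapFinsupp_mem_divisibleAntidiag hD hN⟩, fun k j => ⟨_, hc k j⟩⟩,
    Subtype.ext (DFold.ext ha ?_)⟩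
  funext k j
  show tailSum N (fun k => D.gapFinsupp N k / k) (k + 1) + extendChoice _ (k + 1) j = D.b k j
  rw [ha, extendChoice]
  split_ifs with hk
  · have := D.lower k j
    simp only [Nat.add_sub_cancel]
    omega
  · have hkN : N ≤ k := by simp at hk; omega
    have := D.upper k j
    rw [D.a_eq_zero_of_le hD (hN.trans hkN)] at this
    rw [D.a_eq_zero_of_le hD (hN.trans (hkN.trans k.le_succ))]
    omega

theorem sFold_eq_sum [NeZero d] (hN : n ≤ N) :
    sFold d n = ∑ l ∈ divisibleAntidiag (Icc 1 N) n, ∏ k ∈ Icc 1 N, (l k / k + 1) ^ d := by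
  rw [sFold, ← Nat.card_coe_set_eq, Set.coe_ofPred, ← Nat.card_congr (Equiv.ofBijective _
    ⟨DiamondData.toDFold_injective, DiamondData.toDFold_surjective hN⟩),
    Nat.card_eq_fintype_card, Fintype.card_sigma]
  simp only [Fintype.card_pi, Fintype.card_fin, prod_const, card_univ]
  rw [← sum_coe_sort (divisibleAntidiag (Icc 1 N) n)]
  refine sum_congr rfl fun l _ => ?_
  rw [← prod_coe_sort (Icc 1 N)]

end Diamonds

/-- Coefficientwise form of the infinite product identity: the factors with index `> N` are
`1 + O(q^{N+1})` and do not change the `n`-th coefficient. -/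
theorem schmidt_twofold_generating_function (n N : ℕ) (hnN : n ≤ N) :
    PowerSeries.coeff n
        ((PowerSeries.mk fun m => (sFold 2 m : ℤ)) *
          ∏ m ∈ Finset.Icc 1 N, (1 - (X : ℤ⟦X⟧) ^ m) ^ 3) =
      PowerSeries.coeff n
        (∏ m ∈ Finset.Icc 1 N, (1 + (X : ℤ⟦X⟧) ^ m)) := by
  have hcoeff (i : ℕ) (hi : i ≤ n) :
      coeff i (mk fun m => (sFold 2 m : ℤ)) = coeff i (∏ k ∈ Icc 1 N, layerSeries 2 k) := by
    rw [coeff_mk, coeff_prod_layerSeries, sFold_eq_sum (hi.trans hnN)]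
    simp only [Nat.cast_sum, Nat.cast_prod, Nat.cast_pow]
  rw [coeff_mul_eq_of_coeff_eq hcoeff, ← prod_mul_distrib]
  exact congrArg _ <| prod_congr rfl fun k hk =>
    layerSeries_two_mul_one_sub_X_pow_pow_three (by simp at hk; omega)
end

section
/- Let d ≥ 1 and j ≥ 0 be integers. Then, as an identity of formal power series in the variables x_1, …, x_d, y over ℤ, ∑_{a_1,…,a_d ≥ 0} ∑_{k=0}^{a_1+⋯+a_d+j} x_1^{a_1} ⋯ x_d^{a_d} y^k = (1/(1−y)) · [ ∏_{i=1}^d 1/(1−x_i) − y^{j+1} ∏_{i=1}^d 1/(1−x_i y) ]. -/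
open Finset

/-- The result of applying MacMahon's Omega operator `Ω≥` to
`λ^j / ((1-λx_1)⋯(1-λx_d)(1-λ⁻¹y))`: the multivariate formal power series in
`x_1, …, x_d` (variables `Sum.inl i`) and `y` (variable `Sum.inr ()`) whose
coefficient of `x_1^{a_1} ⋯ x_d^{a_d} y^k` is `1` if `k ≤ a_1 + ⋯ + a_d + j`
and `0` otherwise. -/
noncomputable def omegaLHS (d j : ℕ) : MvPowerSeries (Fin d ⊕ Unit) ℤ :=
  fun e => if e (Sum.inr ()) ≤ (∑ i, e (Sum.inl i)) + j then 1 else 0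

/-!
Multiplying the left-hand side by `1 - y` telescopes each column `k ≤ |a| + j` of coefficients
to its two ends: `∑_a x^a - y^{j+1} ∑_a x^a y^{|a|}`. The two sums are the expansions of
`∏ 1/(1 - x_i)` and `∏ 1/(1 - x_i y)`, both instances of `∏ 1/(1 - x_i y^{c_i})`, whose
coefficient of `x^a y^k` is `1` exactly when `k = ∑ c_i a_i`; this is checked by clearing the
factors one variable at a time.
-/

open MvPowerSeries

namespace MacMahon

variable {R : Type*} [CommRing R]

lemma coeff_mul_one_sub_monomial {σ : Type*} (f : MvPowerSeries σ R) (m e : σ →₀ ℕ) :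
    coeff e (f * (1 - monomial m 1)) = coeff e f - if m ≤ e then coeff (e - m) f else 0 := by
  rw [mul_sub, mul_one, map_sub, coeff_mul_monomial]
  split_ifs <;> simp

lemma single_add_single_le_iff {α : Type*} {a b : α} (hab : a ≠ b) {p q : ℕ}
    {e : α →₀ ℕ} :
    Finsupp.single a p + Finsupp.single b q ≤ e ↔ p ≤ e a ∧ q ≤ e b := by
  classical
  rw [Finsupp.le_def]
  refine ⟨fun h => ⟨by simpa [hab.symm] using h a, by simpa [hab] using h b⟩,
    fun ⟨ha, hb⟩ x => ?_⟩
  simp only [Finsupp.add_apply, Finsupp.single_apply]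
  split_ifs <;> subst_vars <;> simp_all

variable {ι : Type*} [Fintype ι] [DecidableEq ι]

/-- The expansion of `∏_{i ∉ s} 1/(1 - x_i y^{c i})`,
with `x_i = X (inl i)` and `y = X (inr ())`. -/
noncomputable def geomCompl (c : ι → ℕ) (s : Finset ι) : MvPowerSeries (ι ⊕ Unit) R :=
  fun e => if e (.inr ()) = ∑ i ∈ sᶜ, c i * e (.inl i) ∧ ∀ i ∈ s, e (.inl i) = 0 then 1
    else 0

lemma geomCompl_mul_one_sub (c : ι → ℕ) {s : Finset ι} {i : ι} (hi : i ∉ s) :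
    geomCompl c s * (1 - X (.inl i) * X (.inr ()) ^ c i) =
      (geomCompl c (insert i s) : MvPowerSeries (ι ⊕ Unit) R) := by
  ext e
  rw [X_pow_eq, X, monomial_mul_monomial, one_mul, coeff_mul_one_sub_monomial]
  set m : ι ⊕ Unit →₀ ℕ := Finsupp.single (.inl i) 1 + Finsupp.single (.inr ()) (c i)
  have hm_le : m ≤ e ↔ 1 ≤ e (.inl i) ∧ c i ≤ e (.inr ()) :=
    single_add_single_le_iff Sum.inl_ne_inr
  have hsub_inr : (e - m) (.inr ()) = e (.inr ()) - c i := by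
    simp [m]
  have hsub_inl (k : ι) : (e - m) (.inl k) = e (.inl k) - if k = i then 1 else 0 := by
    simp [m, Finsupp.single_apply, eq_comm]
  have hsub_s : (∀ k ∈ s, (e - m) (.inl k) = 0) ↔ ∀ k ∈ s, e (.inl k) = 0 :=
    forall₂_congr fun k hk => by rw [hsub_inl, if_neg (ne_of_mem_of_not_mem hk hi)]; rfl
  have hi_compl : i ∈ sᶜ := mem_compl.2 hi
  have hsum : ∑ k ∈ sᶜ, c k * e (.inl k) =
      c i * e (.inl i) + ∑ k ∈ sᶜ.erase i, c k * e (.inl k) :=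
    (add_sum_erase _ _ hi_compl).symm
  have hsub_sum : ∑ k ∈ sᶜ, c k * (e - m) (.inl k) =
      c i * e (.inl i) - c i + ∑ k ∈ sᶜ.erase i, c k * e (.inl k) := by
    rw [← add_sum_erase _ _ hi_compl, hsub_inl, if_pos rfl, Nat.mul_sub_one]
    congr 1
    exact sum_congr rfl fun k hk => by rw [hsub_inl, if_neg (ne_of_mem_erase hk), Nat.sub_zero]
  simp only [coeff_apply, geomCompl, compl_insert, forall_mem_insert, hm_le, hsub_inr, hsub_s,
    hsub_sum, hsum]
  -- If `x_i` divides the monomial, the shifted condition is the unshifted one; otherwise the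
  -- shift contributes nothing and `c i * e (inl i)` vanishes.
  by_cases hs : ∀ k ∈ s, e (.inl k) = 0
  · simp only [eq_true hs, and_true]
    rcases Nat.eq_zero_or_pos (e (.inl i)) with ha | ha
    · simp [ha]
    · have := Nat.le_mul_of_pos_right (c i) ha
      split_ifs <;> first | (exfalso; omega) | simp
  · simp only [eq_false hs, and_false, if_false, ite_self, sub_zero]

lemma geomCompl_empty_mul_prod (c : ι → ℕ) (s : Finset ι) :
    geomCompl c ∅ * ∏ i ∈ s, (1 - X (.inl i) * X (.inr ()) ^ c i) =
      (geomCompl c s : MvPowerSeries (ι ⊕ Unit) R) := by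
  induction s using Finset.induction_on with
  | empty => simp
  | insert i s hi ih => rw [prod_insert hi, mul_left_comm, mul_comm, ih, geomCompl_mul_one_sub c hi]

lemma geomCompl_univ (c : ι → ℕ) : (geomCompl c univ : MvPowerSeries (ι ⊕ Unit) R) = 1 := by
  ext e
  have he : (e (.inr ()) = 0 ∧ ∀ i : ι, e (.inl i) = 0) ↔ e = 0 := by
    simp only [Finsupp.ext_iff, Sum.forall, Finsupp.coe_zero, Pi.zero_apply]
    exact ⟨fun h => ⟨h.2, fun _ => h.1⟩, fun h => ⟨h.2 (), h.1⟩⟩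
  rw [coeff_one, coeff_apply]
  simp [geomCompl, he]

lemma geomCompl_empty_mul_prod_univ (c : ι → ℕ) :
    (geomCompl c ∅ * ∏ i, (1 - X (.inl i) * X (.inr ()) ^ c i) :
      MvPowerSeries (ι ⊕ Unit) R) = 1 := by
  rw [geomCompl_empty_mul_prod, geomCompl_univ]

lemma omegaLHS_mul_one_sub_X (d j : ℕ) :
    omegaLHS d j * (1 - X (.inr ())) =
      geomCompl 0 ∅ - X (.inr ()) ^ (j + 1) * geomCompl 1 ∅ := by
  ext e
  rw [X_pow_eq, X, coeff_mul_one_sub_monomial, map_sub, coeff_monomial_mul]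
  simp only [coeff_apply, omegaLHS, geomCompl, Finsupp.single_le_iff, Finsupp.tsub_apply,
    Finsupp.single_eq_same, Finsupp.single_apply, reduceCtorEq, if_false, Nat.sub_zero,
    compl_empty, Pi.zero_apply, Pi.one_apply, zero_mul, one_mul, sum_const_zero, notMem_empty,
    false_imp_iff, implies_true, and_true]
  split_ifs <;> omega

end MacMahon

open MacMahon in
theorem macmahon_elimination_general (d : ℕ) (j : ℕ) :
    omegaLHS d j *
        ((1 - MvPowerSeries.X (Sum.inr ())) *
          ((∏ i : Fin d, (1 - MvPowerSeries.X (Sum.inl i))) *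
            ∏ i : Fin d,
              (1 - MvPowerSeries.X (Sum.inl i) *
                MvPowerSeries.X (Sum.inr ()) : MvPowerSeries (Fin d ⊕ Unit) ℤ))) =
      (∏ i : Fin d,
          (1 - MvPowerSeries.X (Sum.inl i) * MvPowerSeries.X (Sum.inr ()))) -
        MvPowerSeries.X (Sum.inr ()) ^ (j + 1) *
          ∏ i : Fin d, (1 - MvPowerSeries.X (Sum.inl i)) := by
  set Px : MvPowerSeries (Fin d ⊕ Unit) ℤ := ∏ i, (1 - X (.inl i))
  set Pxy : MvPowerSeries (Fin d ⊕ Unit) ℤ := ∏ i, (1 - X (.inl i) * X (.inr ()))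
  have hx : geomCompl 0 ∅ * Px = 1 := by
    simpa using geomCompl_empty_mul_prod_univ (R := ℤ) (0 : Fin d → ℕ)
  have hxy : geomCompl 1 ∅ * Pxy = 1 := by
    simpa using geomCompl_empty_mul_prod_univ (R := ℤ) (1 : Fin d → ℕ)
  linear_combination Px * Pxy * omegaLHS_mul_one_sub_X d j + Pxy * hx -
    X (.inr ()) ^ (j + 1) * Px * hxy

/-- MacMahon-type elimination (Proposition 2.2):
`Ω≥ λ^j/((1-λx_1)⋯(1-λx_d)(1-λ⁻¹y))
  = (1/(1-y)) [ ∏ᵢ 1/(1-xᵢ) - y^{j+1} ∏ᵢ 1/(1-xᵢy) ]`,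
as an identity of formal power series over `ℤ`, stated with denominators cleared
(all cleared factors have constant term `1`, hence are units of the power series ring,
so this is equivalent to the stated identity). -/
theorem macmahon_elimination (d : ℕ) (hd : 1 ≤ d) (j : ℕ) :
    omegaLHS d j *
        ((1 - MvPowerSeries.X (Sum.inr ())) *
          ((∏ i : Fin d, (1 - MvPowerSeries.X (Sum.inl i))) *
            ∏ i : Fin d,
              (1 - MvPowerSeries.X (Sum.inl i) *
                MvPowerSeries.X (Sum.inr ()) : MvPowerSeries (Fin d ⊕ Unit) ℤ))) =
      (∏ i : Fin d,
          (1 - MvPowerSeries.X (Sum.inl i) * MvPowerSeries.X (Sum.inr ()))) -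
        MvPowerSeries.X (Sum.inr ()) ^ (j + 1) *
          ∏ i : Fin d, (1 - MvPowerSeries.X (Sum.inl i)) :=
  macmahon_elimination_general d j
end
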